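/- arXiv:2012.07069 — 3 statements merged into one kernel-verified Lean document; each statement's English description precedes it below -/
import Mathlib

section
/- Consider the qubit POVMs M_i^0 = (2/3)|v_i⟩⟨v_i|, M_i^1 = (2/3)|ṽ_i⟩⟨ṽ_i|, M_i^2 = (2/3)|i⟩⟨i| for i ∈ {0,1}, where |v_0⟩ = (|0⟩+√3|1⟩)/2, |v_1⟩ = (√3|0⟩−|1⟩)/2, |ṽ_i⟩ = Z|v_i⟩ with Z = diag(1,−1). Then the single-system distinguishing probability D = max_{|ψ⟩} ∑_{a=0}^{2} max_{i∈{0,1}} (1/2)⟨ψ|M_i^a|ψ⟩ over unit vectors |ψ⟩ ∈ ℂ² equals 5/6. -/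
open Matrix Complex BigOperators

noncomputable section

/-- `|v_0⟩ = (|0⟩ + √3|1⟩)/2` and `|v_1⟩ = (√3|0⟩ − |1⟩)/2`. -/
def v : Fin 2 → Fin 2 → ℂ := ![![1 / 2, Real.sqrt 3 / 2], ![Real.sqrt 3 / 2, -(1 / 2)]]

/-- `|ṽ_i⟩ = diag(1,−1)|v_i⟩`. -/
def vt (i : Fin 2) : Fin 2 → ℂ := (Matrix.diagonal ![1, -1]) *ᵥ v i

/-- Standard basis vector `|i⟩` of `ℂ²`. -/
def ket (i : Fin 2) : Fin 2 → ℂ := fun j => if j = i then 1 else 0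

/-- The POVM elements `M_i^0 = (2/3)|v_i⟩⟨v_i|`, `M_i^1 = (2/3)|ṽ_i⟩⟨ṽ_i|`,
`M_i^2 = (2/3)|i⟩⟨i|`. -/
def M (i : Fin 2) : Fin 3 → Matrix (Fin 2) (Fin 2) ℂ :=
  ![(2 / 3 : ℂ) • vecMulVec (v i) (star (v i)),
    (2 / 3 : ℂ) • vecMulVec (vt i) (star (vt i)),
    (2 / 3 : ℂ) • vecMulVec (ket i) (star (ket i))]

lemma aux_ineq (s u w : ℝ) (hs : s*s=3) (h : u^2 + 4*w^2 ≤ 1) : u + 2*s*w ≤ 2 := by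
  nlinarith [sq_nonneg (s*u - 2*w), sq_nonneg (u + 2*s*w - 2), h, hs]

lemma key_ineq (s E F w : ℝ) (hs : s*s=3) (hEF : E + F = 1) (hE : 0 ≤ E) (hF : 0 ≤ F)
    (hq : (E-F)^2 + 4*w^2 ≤ 1) :
    max ((E+3*F+2*s*w)/12) ((3*E+F-2*s*w)/12)
      + max ((E+3*F-2*s*w)/12) ((3*E+F+2*s*w)/12)
      + max (E/3) (F/3) ≤ 5/6 := by
  have a1 := aux_ineq s (E-F) w hs hq
  have a2 := aux_ineq s (F-E) w hs (by nlinarith [hq])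
  have a3 := aux_ineq s (E-F) (-w) hs (by nlinarith [hq])
  have a4 := aux_ineq s (F-E) (-w) hs (by nlinarith [hq])
  rcases max_cases ((E+3*F+2*s*w)/12) ((3*E+F-2*s*w)/12) with ⟨e1, f1⟩ | ⟨e1, f1⟩ <;>
  rcases max_cases ((E+3*F-2*s*w)/12) ((3*E+F+2*s*w)/12) with ⟨e2, f2⟩ | ⟨e2, f2⟩ <;>
  rcases max_cases (E/3) (F/3) with ⟨e3, f3⟩ | ⟨e3, f3⟩ <;>
  rw [e1, e2, e3] <;>
  linarith [a1, a2, a3, a4]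

set_option maxHeartbeats 1600000 in
/-- The single-system distinguishing probability
`D = max_ψ ∑_a max_i (1/2)⟨ψ|M_i^a|ψ⟩` equals `5/6`. -/
theorem singleSystemD_eq :
    IsGreatest
      {r : ℝ | ∃ ψ : Fin 2 → ℂ, star ψ ⬝ᵥ ψ = 1 ∧
        r = ∑ a : Fin 3,
          max ((1 / 2) * (star ψ ⬝ᵥ (M 0 a *ᵥ ψ)).re)
              ((1 / 2) * (star ψ ⬝ᵥ (M 1 a *ᵥ ψ)).re)}
      (5 / 6) := by
  have hs : Real.sqrt 3 * Real.sqrt 3 = 3 := Real.mul_self_sqrt (by norm_num)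
  constructor
  · refine ⟨![1, 0], by norm_num [dotProduct, Fin.sum_univ_two], ?_⟩
    have h34 : Real.sqrt 3 * 2 / 4 * (Real.sqrt 3 * 2 / 4) = 3/4 := by nlinarith [hs]
    rw [Fin.sum_univ_three]
    simp only [M, v, vt, ket, vecMulVec, mulVec, dotProduct, Fin.sum_univ_two, Matrix.smul_apply,
      Matrix.of_apply, Matrix.cons_val_zero, Matrix.cons_val_one, Matrix.head_cons, Pi.star_apply,
      smul_eq_mul, Complex.add_re, Complex.mul_re, Complex.mul_im, Complex.add_im,
      Complex.conj_re, Complex.conj_im, RCLike.star_def, Complex.div_re, Complex.div_im,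
      Complex.ofReal_re, Complex.ofReal_im, Matrix.diagonal, Matrix.mulVec, Fin.isValue,
      Matrix.cons_val_two, Matrix.tail_cons]
    norm_num [hs, h34]
  · rintro r ⟨ψ, hψ, rfl⟩
    have hn : (ψ 0).re^2 + (ψ 0).im^2 + (ψ 1).re^2 + (ψ 1).im^2 = 1 := by
      have := congrArg Complex.re hψ
      simp only [dotProduct, Fin.sum_univ_two, Pi.star_apply, RCLike.star_def,
        Complex.add_re, Complex.mul_re, Complex.conj_re, Complex.conj_im, Complex.one_re] at this
      nlinarith [this]
    rw [Fin.sum_univ_three]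
    simp only [M, v, vt, ket, vecMulVec, mulVec, dotProduct, Fin.sum_univ_two, Matrix.smul_apply,
      Matrix.of_apply, Matrix.cons_val_zero, Matrix.cons_val_one, Matrix.head_cons, Pi.star_apply,
      smul_eq_mul, Complex.add_re, Complex.mul_re, Complex.mul_im, Complex.add_im,
      Complex.conj_re, Complex.conj_im, RCLike.star_def, Complex.div_re, Complex.div_im,
      Complex.ofReal_re, Complex.ofReal_im, Matrix.diagonal, Matrix.mulVec, Fin.isValue,
      Matrix.cons_val_two, Matrix.tail_cons]
    norm_num
    set a := (ψ 0).re; set b := (ψ 0).im; set c := (ψ 1).re; set d := (ψ 1).im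
    set s := Real.sqrt 3 with hsdef
    clear_value s a b c d
    have hkey := key_ineq s (a^2+b^2) (c^2+d^2) (a*c+b*d) hs (by linarith [hn])
      (by positivity) (by positivity) (by nlinarith [sq_nonneg (a*d - b*c), hn])
    refine le_trans (le_of_eq ?_) hkey
    refine congrArg₂ (· + ·) (congrArg₂ (· + ·) (congrArg₂ max ?_ ?_) (congrArg₂ max ?_ ?_))
      (congrArg₂ max ?_ ?_)
    · linear_combination (c^2+d^2)/12 * hs
    · linear_combination (a^2+b^2)/12 * hs
    · linear_combination (c^2+d^2)/12 * hs
    · linear_combination (a^2+b^2)/12 * hs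
    · ring
    · ring
end
end

section
/- Let |φ⁺⟩ = (|00⟩+|11⟩)/√2 and consider the qubit POVMs M_i^0 = (2/3)|v_i⟩⟨v_i|, M_i^1 = (2/3)|ṽ_i⟩⟨ṽ_i|, M_i^2 = (2/3)|i⟩⟨i| with |v_0⟩ = (|0⟩+√3|1⟩)/2, |v_1⟩ = (√3|0⟩−|1⟩)/2, |ṽ_i⟩ = diag(1,−1)|v_i⟩. Define Bob's projective measurements N_i^0 = (|v_i⟩⟨v_i|)ᵀ, N_i^1 = (|ṽ_i⟩⟨ṽ_i|)ᵀ, N_i^2 = |i⟩⟨i|. Then (1/2)∑_{i=0}^{1}∑_{a=0}^{2} ⟨φ⁺|M_i^a ⊗ N_i^a|φ⁺⟩ = 1, i.e., the two POVMs are perfectly distinguishable with the maximally entangled state. -/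
open Matrix Complex BigOperators Kronecker

noncomputable section

/-- Bob's projective measurement elements `N_i^0 = (|v_i⟩⟨v_i|)ᵀ`,
`N_i^1 = (|ṽ_i⟩⟨ṽ_i|)ᵀ`, `N_i^2 = |i⟩⟨i|`. -/
def N (i : Fin 2) : Fin 3 → Matrix (Fin 2) (Fin 2) ℂ :=
  ![(vecMulVec (v i) (star (v i)))ᵀ,
    (vecMulVec (vt i) (star (vt i)))ᵀ,
    vecMulVec (ket i) (star (ket i))]

/-- The two-qubit maximally entangled state `|φ⁺⟩ = (|00⟩+|11⟩)/√2`. -/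
def phiPlus : Fin 2 × Fin 2 → ℂ :=
  fun p => if p.1 = p.2 then (1 / Real.sqrt 2 : ℂ) else 0

/-!
Since `|φ⁺⟩ = ∑ᵢ |ii⟩/√2`, one has `⟨φ⁺|A ⊗ B|φ⁺⟩ = tr(A Bᵀ)/2`. Bob's elements are the
transposes of Alice's up to the factor `2/3` (for `|i⟩⟨i|`, which is real and symmetric, the
transpose changes nothing), so each of the six terms is `(2/3) tr(P²)/2 = 1/3` with `P` the
projector onto a unit vector, and the six terms weighted by `1/2` add up to `1`.
-/

section

variable {n R : Type*} [Fintype n] [CommSemiring R] [StarRing R]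

theorem star_dotProduct_kronecker_mulVec_diag_state [DecidableEq n] (c : R) (A B : Matrix n n R) :
    star (fun p : n × n => if p.1 = p.2 then c else 0) ⬝ᵥ
        ((A ⊗ₖ B) *ᵥ fun p : n × n => if p.1 = p.2 then c else 0) =
      star c * c * trace (A * Bᵀ) := by
  simp only [dotProduct, mulVec, Fintype.sum_prod_type, kroneckerMap_apply, Pi.star_apply,
    apply_ite star, star_zero, mul_ite, mul_zero, ite_mul, zero_mul, Finset.sum_ite_eq,
    Finset.sum_ite_irrel, Finset.sum_const_zero, Finset.mem_univ, if_true, trace, diag_apply,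
    mul_apply, transpose_apply, Finset.mul_sum]
  refine Finset.sum_congr rfl fun i _ => Finset.sum_congr rfl fun j _ => ?_
  ring

theorem trace_vecMulVec_star_mul_self (u : n → R) :
    trace (vecMulVec u (star u) * vecMulVec u (star u)) = (star u ⬝ᵥ u) ^ 2 := by
  rw [vecMulVec_mul_vecMulVec, trace_vecMulVec, dotProduct_smul, smul_eq_mul, dotProduct_comm,
    sq]

theorem star_diagonal_mulVec_dotProduct [DecidableEq n] {d : n → R}
    (hd : ∀ j, star (d j) * d j = 1) (u : n → R) :
    star (diagonal d *ᵥ u) ⬝ᵥ (diagonal d *ᵥ u) = star u ⬝ᵥ u := by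
  refine Finset.sum_congr rfl fun j _ => ?_
  rw [Pi.star_apply, mulVec_diagonal]
  calc star (d j * u j) * (d j * u j) = (star (d j) * d j) * (star (u j) * u j) := by
        rw [star_mul']; ring
    _ = star (u j) * u j := by rw [hd, one_mul]

end

theorem star_v_dotProduct_v (i : Fin 2) : star (v i) ⬝ᵥ v i = 1 := by
  have h3 : (Real.sqrt 3 : ℂ) ^ 2 = 3 := by
    rw [← Complex.ofReal_pow, Real.sq_sqrt (by norm_num)]; norm_num
  fin_cases i <;> simp [v, dotProduct, Fin.sum_univ_two, map_ofNat] <;> linear_combination h3 / 4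

theorem star_vt_dotProduct_vt (i : Fin 2) : star (vt i) ⬝ᵥ vt i = 1 := by
  rw [vt, star_diagonal_mulVec_dotProduct _ (v i), star_v_dotProduct_v]
  intro j
  fin_cases j <;> simp

theorem star_ket_dotProduct_ket (i : Fin 2) : star (ket i) ⬝ᵥ ket i = 1 := by
  fin_cases i <;> simp [ket, dotProduct, apply_ite star]

theorem transpose_vecMulVec_ket (i : Fin 2) :
    (vecMulVec (ket i) (star (ket i)))ᵀ = vecMulVec (ket i) (star (ket i)) := by
  have star_ket : star (ket i) = ket i := by
    ext j
    by_cases h : j = i <;> simp [ket, h]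
  rw [transpose_vecMulVec, star_ket]

theorem star_phiPlus_dotProduct_kronecker_mulVec (A B : Matrix (Fin 2) (Fin 2) ℂ) :
    star phiPlus ⬝ᵥ ((A ⊗ₖ B) *ᵥ phiPlus) = trace (A * Bᵀ) / 2 := by
  have h2 : (Real.sqrt 2 : ℂ) ^ 2 = 2 := by
    rw [← Complex.ofReal_pow, Real.sq_sqrt (by norm_num)]; norm_num
  refine (star_dotProduct_kronecker_mulVec_diag_state _ A B).trans ?_
  rw [Complex.star_def, map_div₀, map_one, Complex.conj_ofReal, div_mul_div_comm, one_mul, ← sq,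
    h2]
  ring

theorem trace_M_mul_transpose_N (i : Fin 2) (a : Fin 3) : trace (M i a * (N i a)ᵀ) = 2 / 3 := by
  fin_cases a <;>
    simp only [M, N, Fin.zero_eta, Fin.mk_one, Fin.reduceFinMk, cons_val, transpose_transpose,
      transpose_vecMulVec_ket, smul_mul, trace_smul, trace_vecMulVec_star_mul_self,
      star_v_dotProduct_v, star_vt_dotProduct_vt, star_ket_dotProduct_ket] <;> norm_num

/-- The two POVMs are perfectly distinguishable with the maximally entangled
state: `(1/2)∑_{i,a} ⟨φ⁺|M_i^a ⊗ N_i^a|φ⁺⟩ = 1`. -/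
theorem perfect_discrimination_maxEnt :
    (1 / 2 : ℂ) * ∑ i : Fin 2, ∑ a : Fin 3,
        star phiPlus ⬝ᵥ ((M i a ⊗ₖ N i a) *ᵥ phiPlus) = 1 := by
  simp only [star_phiPlus_dotProduct_kronecker_mulVec, trace_M_mul_transpose_N, Finset.sum_const,
    Finset.card_univ, Fintype.card_fin, nsmul_eq_mul]
  norm_num
end
end

section
/- Let ρ_W = p|φ⁺⟩⟨φ⁺| + ((1−p)/4)𝟙 be the two-qubit Werner state with |φ⁺⟩ = (|00⟩+|11⟩)/√2 and 0 ≤ p ≤ 1. For the POVMs M_i^0 = (2/3)|v_i⟩⟨v_i|, M_i^1 = (2/3)|ṽ_i⟩⟨ṽ_i|, M_i^2 = (2/3)|i⟩⟨i| (with |v_0⟩ = (|0⟩+√3|1⟩)/2, |v_1⟩ = (√3|0⟩−|1⟩)/2, |ṽ_i⟩ = diag(1,−1)|v_i⟩) and Bob's measurements N_i^0 = (|v_i⟩⟨v_i|)ᵀ, N_i^1 = (|ṽ_i⟩⟨ṽ_i|)ᵀ, N_i^2 = |i⟩⟨i|, the distinguishing probability (1/2)∑_{i,a} Tr[ρ_W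 (M_i^a ⊗ N_i^a)] equals (1+p)/2. -/
/-!
Write `P = |u⟩⟨u|` for the unit vectors `v_i`, `ṽ_i`, `|i⟩`, so that `M_i^a = (2/3) P` and
`N_i^a = Pᵀ` (for `|i⟩` because it is real). The transpose trick
`⟨φ⁺|(A ⊗ B)|φ⁺⟩ = Tr(A Bᵀ)/2` together with `Tr(A ⊗ B) = Tr A · Tr B` gives
`Tr[ρ_W (A ⊗ B)] = (p/2) Tr(A Bᵀ) + ((1-p)/4) Tr A Tr B`, hence every one of the six terms
equals `p/3 + (1-p)/6 = (1+p)/6`.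
-/

open Matrix Complex BigOperators Kronecker

noncomputable section

/-- The two-qubit Werner state `ρ_W = p|φ⁺⟩⟨φ⁺| + ((1−p)/4)𝟙`. -/
def werner (p : ℝ) : Matrix (Fin 2 × Fin 2) (Fin 2 × Fin 2) ℂ :=
  (p : ℂ) • vecMulVec phiPlus (star phiPlus) +
    (((1 - p) / 4 : ℝ) : ℂ) • 1

namespace Matrix

variable {n : Type*} [Fintype n] [DecidableEq n]

lemma trace_vecMulVec_ite_eq_mul_kronecker {R : Type*} [CommSemiring R] (c d : R)
    (A B : Matrix n n R) :
    (vecMulVec (fun q : n × n => if q.1 = q.2 then c else 0)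
      (fun q : n × n => if q.1 = q.2 then d else 0) * (A ⊗ₖ B)).trace =
      c * d * (A * Bᵀ).trace := by
  simp only [trace, diag, mul_apply, vecMulVec_apply, kroneckerMap_apply, transpose_apply,
    Fintype.sum_prod_type, ite_mul, mul_ite, zero_mul, mul_zero, Finset.mul_sum,
    Finset.sum_ite_irrel, Finset.sum_const_zero, Finset.sum_ite_eq, Finset.mem_univ, if_true]
  exact Finset.sum_comm

lemma diagonal_mulVec_dotProduct_star {R : Type*} [CommRing R] [StarRing R] (d u : n → R)
    (hd : ∀ j, d j * star (d j) = 1) :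
    (diagonal d *ᵥ u) ⬝ᵥ star (diagonal d *ᵥ u) = u ⬝ᵥ star u := by
  simp only [mulVec_diagonal, dotProduct, Pi.star_apply, star_mul']
  refine Finset.sum_congr rfl fun j _ => ?_
  linear_combination (u j * star (u j)) * hd j

end Matrix

lemma star_phiPlus : star phiPlus = phiPlus := by
  funext q
  simp [phiPlus, apply_ite (starRingEnd ℂ)]

lemma trace_phiPlus_mul_kronecker (A B : Matrix (Fin 2) (Fin 2) ℂ) :
    (vecMulVec phiPlus (star phiPlus) * (A ⊗ₖ B)).trace = (A * Bᵀ).trace / 2 := by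
  have hsq : (1 / Real.sqrt 2 : ℂ) * (1 / Real.sqrt 2) = 1 / 2 := by
    rw [div_mul_div_comm, one_mul, ← Complex.ofReal_mul, Real.mul_self_sqrt zero_le_two]
    norm_num
  rw [star_phiPlus]
  exact (trace_vecMulVec_ite_eq_mul_kronecker _ _ A B).trans (by rw [hsq]; ring)

lemma trace_werner_mul_kronecker (p : ℝ) (A B : Matrix (Fin 2) (Fin 2) ℂ) :
    (werner p * (A ⊗ₖ B)).trace =
      p / 2 * (A * Bᵀ).trace + (1 - p) / 4 * (A.trace * B.trace) := by
  rw [werner, add_mul, trace_add, smul_mul, smul_mul, one_mul, trace_smul, trace_smul,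
    trace_phiPlus_mul_kronecker, trace_kronecker]
  push_cast
  simp only [smul_eq_mul]
  ring

lemma trace_werner_mul_smul_projector_kronecker_transpose (p : ℝ) (c : ℂ) (u : Fin 2 → ℂ)
    (hu : u ⬝ᵥ star u = 1) :
    (werner p * ((c • vecMulVec u (star u)) ⊗ₖ (vecMulVec u (star u))ᵀ)).trace =
      c * (1 + p) / 4 := by
  rw [trace_werner_mul_kronecker, transpose_transpose, smul_mul, vecMulVec_mul_vecMulVec,
    trace_smul, trace_transpose, trace_smul, trace_vecMulVec, trace_vecMulVec,
    dotProduct_comm (star u)]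
  simp only [hu, one_smul, smul_eq_mul]
  ring

lemma v_dotProduct_star_v (i : Fin 2) : v i ⬝ᵥ star (v i) = 1 := by
  have h3 : (Real.sqrt 3 : ℂ) ^ 2 = 3 := by
    rw [← Complex.ofReal_pow, Real.sq_sqrt (by norm_num)]; norm_num
  fin_cases i <;>
    simp [v, dotProduct, Fin.sum_univ_two, map_ofNat] <;> linear_combination h3 / 4

lemma vt_dotProduct_star_vt (i : Fin 2) : vt i ⬝ᵥ star (vt i) = 1 := by
  rw [vt, diagonal_mulVec_dotProduct_star _ _ (by simp [Fin.forall_fin_two]), v_dotProduct_star_v]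

lemma star_ket (i : Fin 2) : star (ket i) = ket i := by
  funext j
  simp [ket, apply_ite (starRingEnd ℂ)]

lemma ket_dotProduct_star_ket (i : Fin 2) : ket i ⬝ᵥ star (ket i) = 1 := by
  simp [ket, dotProduct]

lemma trace_werner_mul_M_kronecker_N (p : ℝ) (i : Fin 2) (a : Fin 3) :
    (werner p * (M i a ⊗ₖ N i a)).trace = (1 + p) / 6 := by
  rw [show (1 + (p : ℂ)) / 6 = 2 / 3 * (1 + p) / 4 by ring]
  match a with
  | 0 => exact trace_werner_mul_smul_projector_kronecker_transpose p _ _ (v_dotProduct_star_v i)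
  | 1 => exact trace_werner_mul_smul_projector_kronecker_transpose p _ _ (vt_dotProduct_star_vt i)
  | 2 =>
    have hN : N i 2 = (vecMulVec (ket i) (star (ket i)))ᵀ := by
      show vecMulVec (ket i) (star (ket i)) = _
      rw [transpose_vecMulVec, star_ket]
    rw [hN]
    exact trace_werner_mul_smul_projector_kronecker_transpose p _ _ (ket_dotProduct_star_ket i)

theorem werner_discrimination_general (p : ℝ) :
    (1 / 2 : ℂ) * ∑ i : Fin 2, ∑ a : Fin 3,
        (werner p * (M i a ⊗ₖ N i a)).trace = ((1 + p) / 2 : ℝ) := by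
  simp only [trace_werner_mul_M_kronecker_N, Finset.sum_const, Finset.card_univ, Fintype.card_fin,
    nsmul_eq_mul]
  push_cast
  ring

/-- For the Werner state, the distinguishing probability
`(1/2)∑_{i,a} Tr[ρ_W (M_i^a ⊗ N_i^a)]` equals `(1+p)/2`. -/
theorem werner_discrimination (p : ℝ) (hp0 : 0 ≤ p) (hp1 : p ≤ 1) :
    (1 / 2 : ℂ) * ∑ i : Fin 2, ∑ a : Fin 3,
        (werner p * (M i a ⊗ₖ N i a)).trace = ((1 + p) / 2 : ℝ) :=
  werner_discrimination_general p
end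
end
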